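/- arXiv:2008.10871 — 2 statements merged into one kernel-verified Lean document; each statement's English description precedes it below -/
import Mathlib

section
/- Let H_0 be self-adjoint with an isolated eigenvalue λ_0 of finite multiplicity, P_0 the spectral projection onto its eigenspace, P_0^⊥ = 1 - P_0, γ_0 the spectral gap of λ_0, and H_{0,α} := P_0^⊥(H_0+α)P_0^⊥ restricted to Ran P_0^⊥, with H_0 + α > 0. Then for λ ∈ ℂ with Re λ ∈ [λ_0 - γ_0/2, λ_0 + γ_0/2], the operator |1 - (λ+α) H_{0,α}^{-1}| on Ran P_0^⊥ is bounded below by γ_0/(2λ_∘), where λ_∘ = λ_0 + γ_0 + α. -/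
/-!
By the continuous functional calculus for the normal operator `A`, the operator
`1 - (λ + α)(A + α)⁻¹` is `f(A)` with `f z = (z - λ) / (z + α)`, and a normal operator `f(A)` with
`|f| ≥ c > 0` on `σ(A)` has an inverse of norm `≤ c⁻¹`. So it suffices to bound
`|x - λ| / (x + α)` from below for real `x ∈ σ(A)`: if `x ≤ λ₀ - γ₀` then `|x - λ| ≥ γ₀ / 2` while
`x + α ≤ λ₀ + γ₀ + α`, and if `x ≥ λ₀ + γ₀` then `|x - λ| ≥ x - λ₀ - γ₀ / 2`, where
`(x - λ₀ - γ₀ / 2) / (x + α)` is increasing in `x` (as `λ₀ + α > 0`) and equals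
`γ₀ / (2 (λ₀ + γ₀ + α))` at `x = λ₀ + γ₀`.
-/

open Set

lemma gap_div_mul_le_abs_sub {lam0 γ0 α x r : ℝ} (hγ : 0 < γ0) (hα : 0 < lam0 + α)
    (hgap : γ0 ≤ |x - lam0|) (hr : r ∈ Icc (lam0 - γ0 / 2) (lam0 + γ0 / 2)) :
    γ0 / (2 * (lam0 + γ0 + α)) * (x + α) ≤ |x - r| := by
  obtain ⟨hr₁, hr₂⟩ := hr
  rw [div_mul_eq_mul_div, div_le_iff₀ (by linarith)]
  rcases le_abs'.mp hgap with hbelow | habove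
  · have : γ0 / 2 ≤ |x - r| := le_abs'.mpr (Or.inl (by linarith))
    nlinarith
  · have : x - r ≤ |x - r| := le_abs_self _
    nlinarith

lemma gap_div_le_norm_one_sub_mul_inv {lam0 γ0 α x : ℝ} {lam : ℂ} (hγ : 0 < γ0)
    (hα : 0 < lam0 + α) (hx : 0 < x + α) (hgap : γ0 ≤ |x - lam0|)
    (hlam : lam.re ∈ Icc (lam0 - γ0 / 2) (lam0 + γ0 / 2)) :
    γ0 / (2 * (lam0 + γ0 + α)) ≤ ‖1 - (lam + α) * ((x : ℂ) + α)⁻¹‖ := by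
  have hxα : (x : ℂ) + α = ((x + α : ℝ) : ℂ) := by push_cast; ring
  have hne : (x : ℂ) + α ≠ 0 := by rw [hxα]; exact_mod_cast hx.ne'
  have hquot : 1 - (lam + α) * ((x : ℂ) + α)⁻¹ = ((x : ℂ) - lam) / ((x + α : ℝ) : ℂ) := by
    rw [← hxα]; field_simp; ring
  rw [hquot, norm_div, Complex.norm_real, Real.norm_of_nonneg hx.le, le_div_iff₀ hx]
  calc γ0 / (2 * (lam0 + γ0 + α)) * (x + α) ≤ |x - lam.re| :=
        gap_div_mul_le_abs_sub hγ hα hgap hlam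
    _ ≤ ‖(x : ℂ) - lam‖ := by simpa using Complex.abs_re_le_norm ((x : ℂ) - lam)

lemma add_ne_zero_of_isUnit_add_smul_one {R A : Type*} [Field R] [Ring A] [Algebra R A]
    {a : A} {μ : R} (h : IsUnit (a + μ • 1)) {z : R} (hz : z ∈ spectrum R a) : z + μ ≠ 0 := by
  intro hzμ
  apply spectrum.zero_notMem R h
  rw [← Algebra.algebraMap_eq_smul_one, ← spectrum.add_singleton_eq]
  exact ⟨z, hz, μ, rfl, hzμ⟩

lemma IsUnit.unit_inv_add_smul_one_eq_cfc {E : Type*} [CStarAlgebra E] {a : E} [IsStarNormal a]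
    {μ : ℂ} (h : IsUnit (a + μ • 1)) : (↑h.unit⁻¹ : E) = cfc (fun z => (z + μ)⁻¹) a := by
  have hcfc : cfc (fun z => z + μ) a = a + μ • 1 := by
    rw [cfc_add_const .., cfc_id' .., Algebra.algebraMap_eq_smul_one]
  rw [cfc_inv _ a fun z hz => add_ne_zero_of_isUnit_add_smul_one h hz, hcfc,
    ← Ring.inverse_unit, h.unit_spec]

lemma ContinuousLinearMap.mul_norm_le_norm_cfc_apply {Y : Type*} [NormedAddCommGroup Y]
    [InnerProductSpace ℂ Y] [CompleteSpace Y] {A : Y →L[ℂ] Y} [IsStarNormal A] {f : ℂ → ℂ}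
    {c : ℝ} (hc : 0 < c) (hf : ContinuousOn f (spectrum ℂ A))
    (hbound : ∀ z ∈ spectrum ℂ A, c ≤ ‖f z‖) (u : Y) : c * ‖u‖ ≤ ‖cfc f A u‖ := by
  have hf0 : ∀ z ∈ spectrum ℂ A, f z ≠ 0 := fun z hz =>
    norm_pos_iff.mp (hc.trans_le (hbound z hz))
  set W := cfcUnits f A hf0
  have hWinv : ‖(↑W⁻¹ : Y →L[ℂ] Y)‖ ≤ c⁻¹ := by
    refine norm_cfc_le (by positivity) fun z hz => ?_
    rw [norm_inv]
    exact inv_anti₀ hc (hbound z hz)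
  calc c * ‖u‖ = c * ‖(↑W⁻¹ : Y →L[ℂ] Y) (cfc f A u)‖ := by
        rw [← mul_apply_eq_comp, ← val_cfcUnits f A hf0, Units.inv_mul,
          one_apply_eq_self]
    _ ≤ c * (c⁻¹ * ‖cfc f A u‖) := by
        gcongr
        exact (ContinuousLinearMap.le_opNorm _ _).trans (by gcongr)
    _ = ‖cfc f A u‖ := by field_simp

/-- `A` plays the role of `H₀` restricted to `Ran P₀^⊥`; since `‖ |B| u ‖ = ‖B u‖`, the lower
bound on the operator modulus is stated as a norm lower bound. -/
theorem stmt_3 {Y : Type*} [NormedAddCommGroup Y] [InnerProductSpace ℂ Y] [CompleteSpace Y]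
    (A : Y →L[ℂ] Y) (hA : IsSelfAdjoint A)
    (lam0 γ0 α : ℝ) (hγ : 0 < γ0) (hα : 0 < lam0 + α)
    (hspec : spectrum ℂ A ⊆ {z : ℂ | ∃ x : ℝ, z = (x : ℂ) ∧ -α ≤ x ∧ γ0 ≤ |x - lam0|})
    (hunit : IsUnit (A + (α : ℂ) • 1))
    (lam : ℂ) (hlam : lam.re ∈ Set.Icc (lam0 - γ0 / 2) (lam0 + γ0 / 2)) :
    ∀ u : Y,
      γ0 / (2 * (lam0 + γ0 + α)) * ‖u‖
        ≤ ‖(1 - (lam + (α : ℂ)) • ((hunit.unit⁻¹ : (Y →L[ℂ] Y)ˣ) : Y →L[ℂ] Y)) u‖ := by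
  have := hA.isStarNormal
  have hshift : ∀ z ∈ spectrum ℂ A, z + α ≠ 0 := fun z hz =>
    add_ne_zero_of_isUnit_add_smul_one hunit hz
  have hres : ContinuousOn (fun z : ℂ => (z + α)⁻¹) (spectrum ℂ A) :=
    (continuousOn_id.add continuousOn_const).inv₀ hshift
  have hT : 1 - (lam + α) • cfc (fun z : ℂ => (z + α)⁻¹) A
      = cfc (fun z : ℂ => 1 - (lam + α) * (z + α)⁻¹) A := by
    rw [cfc_sub (fun _ => 1) (fun z : ℂ => (lam + α) * (z + α)⁻¹) A continuousOn_const
      (continuousOn_const.mul hres), cfc_const_mul _ _ A hres, cfc_const_one ℂ A]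
  rw [hunit.unit_inv_add_smul_one_eq_cfc, hT]
  refine ContinuousLinearMap.mul_norm_le_norm_cfc_apply (div_pos hγ (by linarith))
    (continuousOn_const.sub (continuousOn_const.mul hres)) ?_
  intro z hz
  obtain ⟨x, rfl, hx, hgap⟩ := hspec hz
  have hxα : 0 < x + α :=
    (neg_le_iff_add_nonneg.mp hx).lt_of_ne fun h => hshift x hz (by exact_mod_cast h.symm)
  exact gap_div_le_norm_one_sub_mul_inv hγ hα hxα hgap hlam
end

section
/- Let H be a self-adjoint operator on a Hilbert space, P an orthogonal projection with complement P^⊥ = 1 - P, such that H^⊥ := P^⊥ H P^⊥ - λ is invertible on Ran P^⊥. Then λ is an eigenvalue of H with eigenvector ψ if and only if F_P(H - λ)φ = 0 where φ = Pψ and F_P(H-λ) := P(H - λ - H P^⊥(H^⊥ - λ)^{-1}P^⊥ H)P; moreover ψ is recovered from φ via ψ = (P - P^⊥(H^⊥-λ)^{-1}P^⊥ H P)φ, and dim ker(H - λ) = dim ker F_P(H - λ). -/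
/-!
Split the eigenvalue equation `(H - λ) ψ = 0` into its `P` and `1 - P` components. The
`1 - P` component, solved with the inverse `G` of `(1 - P) (H - λ) (1 - P)` on `Ran (1 - P)`,
says `(1 - P) ψ = - G H P ψ`; substituting this into the `P` component leaves the Feshbach
equation `F φ = 0` for `φ = P ψ`. Conversely `φ ↦ φ - G H φ` undoes the projection, so `P`
and this lift are mutually inverse linear maps between `ker (H - λ)` and `ker F ∩ Ran P`.
-/

universe u

open ContinuousLinearMap

theorem IsIdempotentElem.mul_one_sub_of_eq_conj {A : Type*} [Ring A] {p g : A}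
    (hp : IsIdempotentElem p) (hg : g = (1 - p) * (g * (1 - p))) : g * (1 - p) = g := by
  rw [hg, mul_assoc, mul_assoc, hp.one_sub.eq]

theorem IsIdempotentElem.mul_eq_zero_of_eq_conj {A : Type*} [Ring A] {p g : A}
    (hp : IsIdempotentElem p) (hg : g = (1 - p) * (g * (1 - p))) : p * g = 0 := by
  rw [hg, ← mul_assoc, hp.mul_one_sub_self, zero_mul]

theorem Submodule.rank_eq_of_mapsTo_of_inverse {R : Type*} {M N : Type u} [Ring R]
    [AddCommGroup M] [Module R M] [AddCommGroup N] [Module R N]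
    {S : Submodule R M} {T : Submodule R N} (f : M →ₗ[R] N) (g : N →ₗ[R] M)
    (hf : ∀ x ∈ S, f x ∈ T) (hg : ∀ y ∈ T, g y ∈ S)
    (hgf : ∀ x ∈ S, g (f x) = x) (hfg : ∀ y ∈ T, f (g y) = y) :
    Module.rank R S = Module.rank R T :=
  LinearEquiv.rank_eq <| LinearEquiv.ofLinearMap (f := f.restrict hf) (g := g.restrict hg)
    (LinearMap.ext fun y => Subtype.ext (hfg y y.2))
    (LinearMap.ext fun x => Subtype.ext (hgf x x.2))

section Feshbach

variable {R : Type*} {M : Type u} [CommRing R] [AddCommGroup M] [Module R M]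
  [TopologicalSpace M] [IsTopologicalAddGroup M] {H P G : M →L[R] M} {lam : R}

variable (H P G) in
def feshbachLift : M →L[R] M :=
  P - G ∘L H ∘L P

theorem proj_feshbachLift_apply (hPG : P ∘L G = 0) {φ : M} (hφ : P φ = φ) :
    P (feshbachLift H P G φ) = φ := by
  have hPGx : P (G (H φ)) = 0 := congr($hPG (H φ))
  simp [feshbachLift, hφ, hPGx]

variable [ContinuousConstSMul R M]

variable (H P lam) in
def complementBlock : M →L[R] M :=
  (1 - P) ∘L H ∘L (1 - P) - lam • (1 - P)

variable (H P G lam) in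
def feshbachMap : M →L[R] M :=
  P ∘L (H - lam • 1) ∘L P - P ∘L H ∘L G ∘L H ∘L P

theorem complement_inverse_apply_of_eigen (hP : P ∘L P = P) (hG : G ∘L (1 - P) = G)
    (hG2 : G ∘L complementBlock H P lam = 1 - P)
    {ψ : M} (hψ : H ψ = lam • ψ) : G (H (P ψ)) = P ψ - ψ := by
  have hPP : P (P ψ) = P ψ := congr($hP ψ)
  have hGPp : G (H (P ψ) - P (H (P ψ))) = G (H (P ψ)) := by simpa using congr($hG (H (P ψ)))
  have hcompl : complementBlock H P lam (ψ - P ψ) = -(H (P ψ) - P (H (P ψ))) := by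
    simp only [complementBlock, comp_apply, sub_apply, smul_apply, one_apply_eq_self, map_sub,
      map_smul, hψ, hPP]
    module
  have h := congr($hG2 (ψ - P ψ))
  rw [comp_apply, hcompl, map_neg, hGPp] at h
  simp only [sub_apply, one_apply_eq_self, map_sub, hPP] at h
  linear_combination (norm := module) -h

theorem feshbachMap_apply_proj_of_eigen (hP : P ∘L P = P) (hG : G ∘L (1 - P) = G)
    (hG2 : G ∘L complementBlock H P lam = 1 - P)
    {ψ : M} (hψ : H ψ = lam • ψ) : feshbachMap H P G lam (P ψ) = 0 := by
  have hPP : P (P ψ) = P ψ := congr($hP ψ)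
  simp only [feshbachMap, sub_apply, comp_apply, smul_apply, one_apply_eq_self, hPP,
    complement_inverse_apply_of_eigen hP hG hG2 hψ, map_sub, map_smul, hψ]
  module

theorem feshbachLift_apply_proj_of_eigen (hP : P ∘L P = P) (hG : G ∘L (1 - P) = G)
    (hG2 : G ∘L complementBlock H P lam = 1 - P)
    {ψ : M} (hψ : H ψ = lam • ψ) : feshbachLift H P G (P ψ) = ψ := by
  have hPP : P (P ψ) = P ψ := congr($hP ψ)
  simp only [feshbachLift, sub_apply, comp_apply, hPP,
    complement_inverse_apply_of_eigen hP hG hG2 hψ, sub_sub_cancel]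

theorem eigen_feshbachLift_of_feshbachMap_eq_zero (hPG : P ∘L G = 0)
    (hG1 : complementBlock H P lam ∘L G = 1 - P)
    {φ : M} (hφ : P φ = φ) (hF : feshbachMap H P G lam φ = 0) :
    H (feshbachLift H P G φ) = lam • feshbachLift H P G φ := by
  have hPGx : P (G (H φ)) = 0 := congr($hPG (H φ))
  have hB := congr($hG1 (H φ))
  simp only [complementBlock, comp_apply, sub_apply, smul_apply, one_apply_eq_self, hPGx,
    sub_zero] at hB
  simp only [feshbachMap, feshbachLift, sub_apply, comp_apply, smul_apply, one_apply_eq_self, hφ,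
    map_sub, map_smul] at hF ⊢
  linear_combination (norm := module) hF - hB

theorem mem_ker_sub_smul_one_iff {ψ : M} :
    ψ ∈ LinearMap.ker ((H - lam • 1 : M →L[R] M) : M →ₗ[R] M) ↔ H ψ = lam • ψ := by
  rw [LinearMap.mem_ker, coe_coe, sub_apply, smul_apply, one_apply_eq_self, sub_eq_zero]

theorem rank_ker_sub_smul_one_eq_rank_ker_feshbachMap_inf_range (hP : P ∘L P = P)
    (hG : G ∘L (1 - P) = G) (hPG : P ∘L G = 0)
    (hG1 : complementBlock H P lam ∘L G = 1 - P)
    (hG2 : G ∘L complementBlock H P lam = 1 - P) :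
    Module.rank R (LinearMap.ker ((H - lam • 1 : M →L[R] M) : M →ₗ[R] M))
      = Module.rank R ↥(LinearMap.ker (feshbachMap H P G lam : M →ₗ[R] M)
          ⊓ LinearMap.range (P : M →ₗ[R] M)) := by
  have hran {φ : M} (hφ : φ ∈ LinearMap.range (P : M →ₗ[R] M)) : P φ = φ := by
    obtain ⟨x, rfl⟩ := hφ
    exact congr($hP x)
  refine Submodule.rank_eq_of_mapsTo_of_inverse (P : M →ₗ[R] M)
    (feshbachLift H P G : M →ₗ[R] M)
    (fun ψ hψ => ?_) (fun φ hφ => ?_) (fun ψ hψ => ?_) (fun φ hφ => ?_)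
  · rw [mem_ker_sub_smul_one_iff] at hψ
    exact ⟨feshbachMap_apply_proj_of_eigen hP hG hG2 hψ, ψ, rfl⟩
  · rw [mem_ker_sub_smul_one_iff]
    exact eigen_feshbachLift_of_feshbachMap_eq_zero hPG hG1 (hran hφ.2) hφ.1
  · rw [mem_ker_sub_smul_one_iff] at hψ
    exact feshbachLift_apply_proj_of_eigen hP hG hG2 hψ
  · exact proj_feshbachLift_apply hPG (hran hφ.2)

end Feshbach

theorem stmt_19_general {X : Type*} [NormedAddCommGroup X] [InnerProductSpace ℂ X]
    (H P : X →L[ℂ] X) (lam : ℂ)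
    (hPidem : P ∘L P = P)
    (G : X →L[ℂ] X)
    (hG : G = (1 - P) ∘L G ∘L (1 - P))
    (hG1 : ((1 - P) ∘L H ∘L (1 - P) - lam • (1 - P)) ∘L G = 1 - P)
    (hG2 : G ∘L ((1 - P) ∘L H ∘L (1 - P) - lam • (1 - P)) = 1 - P) :
    (∀ ψ : X, H ψ = lam • ψ →
        (P ∘L (H - lam • 1) ∘L P - P ∘L H ∘L G ∘L H ∘L P) (P ψ) = 0 ∧
          (P - G ∘L H ∘L P) (P ψ) = ψ) ∧
      (∀ φ : X, P φ = φ →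
        (P ∘L (H - lam • 1) ∘L P - P ∘L H ∘L G ∘L H ∘L P) φ = 0 →
          H ((P - G ∘L H ∘L P) φ) = lam • ((P - G ∘L H ∘L P) φ)) ∧
      Module.rank ℂ (LinearMap.ker ((H - lam • 1 : X →L[ℂ] X) : X →ₗ[ℂ] X))
        = Module.rank ℂ
            ↥(LinearMap.ker
              ((P ∘L (H - lam • 1) ∘L P - P ∘L H ∘L G ∘L H ∘L P : X →L[ℂ] X) : X →ₗ[ℂ] X)
              ⊓ LinearMap.range ((P : X →L[ℂ] X) : X →ₗ[ℂ] X)) := by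
  have hPidem' : IsIdempotentElem P := hPidem
  have hGP : G ∘L (1 - P) = G := hPidem'.mul_one_sub_of_eq_conj hG
  have hPG : P ∘L G = 0 := hPidem'.mul_eq_zero_of_eq_conj hG
  exact ⟨fun ψ hψ => ⟨feshbachMap_apply_proj_of_eigen hPidem hGP hG2 hψ,
      feshbachLift_apply_proj_of_eigen hPidem hGP hG2 hψ⟩,
    fun φ hφ hF => eigen_feshbachLift_of_feshbachMap_eq_zero hPG hG1 hφ hF,
    rank_ker_sub_smul_one_eq_rank_ker_feshbachMap_inf_range hPidem hGP hPG hG1 hG2⟩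

/-- Isospectrality of the Feshbach–Schur map: `H` self-adjoint, `P` an
orthogonal projection with complement `Pp = 1 - P`, and `G` the inverse on
`Ran Pp` of `Pp H Pp - λ`.  With
`F = P (H - λ - H G H) P` and the lifting map `Q = P - G ∘ H ∘ P`:
eigenvectors of `H` for `λ` project to zeros of `F` (and are recovered by `Q`),
zeros of `F` in `Ran P` lift to eigenvectors of `H`, and the kernels have the
same dimension. -/
theorem stmt_19 {X : Type*} [NormedAddCommGroup X] [InnerProductSpace ℂ X] [CompleteSpace X]
    (H P : X →L[ℂ] X) (lam : ℂ)
    (hH : IsSelfAdjoint H) (hP : IsSelfAdjoint P) (hPidem : P ∘L P = P)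
    (G : X →L[ℂ] X)
    (hG : G = (1 - P) ∘L G ∘L (1 - P))
    (hG1 : ((1 - P) ∘L H ∘L (1 - P) - lam • (1 - P)) ∘L G = 1 - P)
    (hG2 : G ∘L ((1 - P) ∘L H ∘L (1 - P) - lam • (1 - P)) = 1 - P) :
    (∀ ψ : X, H ψ = lam • ψ →
        (P ∘L (H - lam • 1) ∘L P - P ∘L H ∘L G ∘L H ∘L P) (P ψ) = 0 ∧
          (P - G ∘L H ∘L P) (P ψ) = ψ) ∧
      (∀ φ : X, P φ = φ →
        (P ∘L (H - lam • 1) ∘L P - P ∘L H ∘L G ∘L H ∘L P) φ = 0 →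
          H ((P - G ∘L H ∘L P) φ) = lam • ((P - G ∘L H ∘L P) φ)) ∧
      Module.rank ℂ (LinearMap.ker ((H - lam • 1 : X →L[ℂ] X) : X →ₗ[ℂ] X))
        = Module.rank ℂ
            ↥(LinearMap.ker
              ((P ∘L (H - lam • 1) ∘L P - P ∘L H ∘L G ∘L H ∘L P : X →L[ℂ] X) : X →ₗ[ℂ] X)
              ⊓ LinearMap.range ((P : X →L[ℂ] X) : X →ₗ[ℂ] X)) :=
  stmt_19_general H P lam hPidem G hG hG1 hG2
end
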